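/- arXiv:1409.4067 — 3 statements merged into one kernel-verified Lean document; each statement's English description precedes it below -/
import Mathlib

section
/- Let ω, ω_X, ω_C, γ, g be real numbers with γ ≠ 0, g < 0, ω > max(ω_X, ω_C), and 0 < ϖ_X·ϖ_C < γ² (band 2.2). Then there exist functions φ_X, φ_C : ℝ → ℝ, with φ_X continuously differentiable and φ_C twice continuously differentiable, satisfying the stationary polariton envelope equations at every x ∈ ℝ, such that φ_X and φ_C are even and bounded, φ_X(x) → 0 and φ_C(x) → 0 as x → +∞ and as x → −∞, and the supremum over x ∈ ℝ of |g|·φ_X(x)² is attained and equals −ϖ_X + (γ²/ϖ_C)·(3/4 + √(9/16 − ϖ_X·ϖ_C/(2γ²))). -/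
/-!
The first equation expresses `φC = (ϖX φX + |g| φX³) / γ` through `φX`, and the second then has a
first integral `(φC')² = W(φX)`. Writing `φX = u₀ - w²`, where `u₀` is the turning point of that
first integral, removes the square-root singularity at the peak: the first integral becomes the
autonomous equation `w' = v(w)` with `v` even, positive on `(-√u₀, √u₀)` and vanishing only
linearly at `±√u₀`. The time map `p ↦ ∫₀ᵖ ds / v(s)` therefore diverges logarithmically at
`±√u₀`, and its inverse is an odd solution `w` running from `-√u₀` to `√u₀`. So `φX = u₀ - w²` is
an even pulse decaying at `±∞` with maximum `u₀` at `0`, and `|g| u₀²` is the positive root of a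
quadratic.
-/

open Filter Set Real Topology

noncomputable section

section contDiff

variable {𝕜 F : Type*} [NontriviallyNormedField 𝕜] [NormedAddCommGroup F] [NormedSpace 𝕜 F]
  {f f' f'' : 𝕜 → F}

lemma contDiff_one_of_hasDerivAt (hf : ∀ x, HasDerivAt f (f' x) x) (hf' : Continuous f') :
    ContDiff 𝕜 1 f :=
  contDiff_one_iff_deriv.mpr
    ⟨fun x => (hf x).differentiableAt,
      by rwa [show deriv f = f' from funext fun x => (hf x).deriv]⟩

lemma contDiff_two_of_hasDerivAt (hf : ∀ x, HasDerivAt f (f' x) x)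
    (hf' : ∀ x, HasDerivAt f' (f'' x) x) (hf'' : Continuous f'') : ContDiff 𝕜 2 f := by
  rw [show (2 : WithTop ℕ∞) = 1 + 1 from rfl, contDiff_succ_iff_deriv,
    show deriv f = f' from funext fun x => (hf x).deriv]
  exact ⟨fun x => (hf x).differentiableAt, by simp, contDiff_one_of_hasDerivAt hf' hf''⟩

end contDiff

/-- A diffeomorphism `ℝ ≃ (-a, a)`: composing with it turns maps defined on `(-a, a)` into maps
on `ℝ`, which can then be inverted as order isomorphisms. -/
def squash (a z : ℝ) : ℝ := 2 * a / π * arctan z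

lemma hasDerivAt_squash (a z : ℝ) :
    HasDerivAt (squash a) (2 * a / π * (1 / (1 + z ^ 2))) z :=
  (hasDerivAt_arctan z).const_mul _

lemma squash_neg (a z : ℝ) : squash a (-z) = -squash a z := by
  simp [squash, arctan_neg]

lemma squash_mem_Ioo {a : ℝ} (ha : 0 < a) (z : ℝ) : squash a z ∈ Ioo (-a) a := by
  have hc : 0 < 2 * a / π := by positivity
  constructor
  · calc -a = 2 * a / π * (-(π / 2)) := by field_simp
      _ < squash a z := mul_lt_mul_of_pos_left (neg_pi_div_two_lt_arctan z) hc
  · calc squash a z < 2 * a / π * (π / 2) := mul_lt_mul_of_pos_left (arctan_lt_pi_div_two z) hc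
      _ = a := by field_simp

lemma squash_nonneg {a z : ℝ} (ha : 0 ≤ a) (hz : 0 ≤ z) : 0 ≤ squash a z :=
  mul_nonneg (by positivity) (arctan_nonneg.mpr hz)

lemma tendsto_squash_atTop {a : ℝ} (ha : 0 < a) : Tendsto (squash a) atTop (𝓝[<] a) := by
  refine tendsto_nhdsWithin_iff.mpr ⟨?_, .of_forall fun z => (squash_mem_Ioo ha z).2⟩
  have h := (tendsto_arctan_atTop.mono_right nhdsWithin_le_nhds).const_mul (2 * a / π)
  rwa [show 2 * a / π * (π / 2) = a by field_simp] at h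

def timeMap (v : ℝ → ℝ) (p : ℝ) : ℝ := ∫ s in (0 : ℝ)..p, (v s)⁻¹

section timeMap

variable {v : ℝ → ℝ} {a : ℝ}

lemma timeMap_neg (hv : ∀ q, v (-q) = v q) (p : ℝ) : timeMap v (-p) = -timeMap v p := by
  have := intervalIntegral.integral_comp_neg (a := 0) (b := p) fun s => (v s)⁻¹
  simp only [hv, neg_zero] at this
  rw [timeMap, timeMap, this, intervalIntegral.integral_symm]

lemma hasDerivAt_timeMap (hv : ContinuousOn v (Ioo (-a) a)) (hpos : ∀ q ∈ Ioo (-a) a, 0 < v q)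
    {p : ℝ} (hp : p ∈ Ioo (-a) a) : HasDerivAt (timeMap v) (v p)⁻¹ p := by
  have hinv : ContinuousOn (fun s => (v s)⁻¹) (Ioo (-a) a) :=
    hv.inv₀ fun q hq => (hpos q hq).ne'
  have h0 : (0 : ℝ) ∈ Ioo (-a) a := ⟨by linarith [hp.1, hp.2], by linarith [hp.1, hp.2]⟩
  exact intervalIntegral.integral_hasDerivAt_right
    (hinv.mono (ordConnected_Ioo.uIcc_subset h0 hp)).intervalIntegrable
    (hinv.stronglyMeasurableAtFilter isOpen_Ioo _ hp) (hinv.continuousAt (isOpen_Ioo.mem_nhds hp))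

lemma inv_mul_log_le_timeMap (hv : ContinuousOn v (Ioo (-a) a))
    (hpos : ∀ q ∈ Ioo (-a) a, 0 < v q) {L : ℝ} (hL : 0 < L)
    (hle : ∀ q ∈ Ico 0 a, v q ≤ L * (a - q)) {p : ℝ} (hp : p ∈ Ico 0 a) :
    L⁻¹ * log (a / (a - p)) ≤ timeMap v p := by
  have hsub : Icc 0 p ⊆ Ico 0 a := Icc_subset_Ico_right hp.2
  have hIoo : Icc 0 p ⊆ Ioo (-a) a :=
    fun q hq => ⟨by linarith [hq.1, hp.1, hp.2], (hsub hq).2⟩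
  have hlog : L⁻¹ * log (a / (a - p)) = ∫ s in (0 : ℝ)..p, (L * (a - s))⁻¹ := by
    simp only [mul_inv, intervalIntegral.integral_const_mul,
      intervalIntegral.integral_comp_sub_left (fun s => s⁻¹), sub_zero]
    rw [integral_inv_of_pos (by linarith [hp.2]) (by linarith [hp.1, hp.2])]
  rw [hlog, timeMap]
  refine intervalIntegral.integral_mono_on hp.1 ?_ ?_ fun q hq => ?_
  · refine ContinuousOn.intervalIntegrable ?_
    rw [uIcc_of_le hp.1]
    exact (continuousOn_const.mul (continuousOn_const.sub continuousOn_id)).inv₀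
      fun q hq => (mul_pos hL (sub_pos.mpr (hsub hq).2)).ne'
  · refine ContinuousOn.intervalIntegrable ?_
    rw [uIcc_of_le hp.1]
    exact (hv.mono hIoo).inv₀ fun q hq => (hpos q (hIoo hq)).ne'
  · exact inv_anti₀ (hpos q (hIoo hq)) (hle q (hsub hq))

end timeMap

lemma tendsto_div_sub_atTop {a : ℝ} (ha : 0 < a) :
    Tendsto (fun s => a / (a - s)) (𝓝[<] a) atTop := by
  have hsub : Tendsto (fun s => a - s) (𝓝[<] a) (𝓝[>] 0) := by
    refine tendsto_nhdsWithin_iff.mpr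
      ⟨?_, eventually_nhdsWithin_of_forall fun s (hs : s < a) => sub_pos.mpr hs⟩
    have h : Tendsto (fun s => a - s) (𝓝 a) (𝓝 (a - a)) := tendsto_const_nhds.sub tendsto_id
    simpa only [sub_self] using h.mono_left nhdsWithin_le_nhds
  simpa only [div_eq_mul_inv, Function.comp_def] using
    (tendsto_inv_nhdsGT_zero.comp hsub).const_mul_atTop ha

section heteroclinic

variable {v : ℝ → ℝ} {a L : ℝ}

lemma tendsto_timeMap_comp_squash_atTop (ha : 0 < a) (hL : 0 < L)
    (hv : ContinuousOn v (Ioo (-a) a)) (hpos : ∀ q ∈ Ioo (-a) a, 0 < v q)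
    (hle : ∀ q ∈ Ico 0 a, v q ≤ L * (a - q)) :
    Tendsto (fun z => timeMap v (squash a z)) atTop atTop := by
  have hlog : Tendsto (fun z => L⁻¹ * log (a / (a - squash a z))) atTop atTop :=
    (tendsto_log_atTop.comp ((tendsto_div_sub_atTop ha).comp
      (tendsto_squash_atTop ha))).const_mul_atTop (inv_pos.mpr hL)
  refine tendsto_atTop_mono' atTop ?_ hlog
  filter_upwards [eventually_ge_atTop 0] with z hz
  exact inv_mul_log_le_timeMap hv hpos hL hle ⟨squash_nonneg ha.le hz, (squash_mem_Ioo ha z).2⟩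

theorem exists_odd_heteroclinic (ha : 0 < a) (hL : 0 < L)
    (hv : ContinuousOn v (Ioo (-a) a)) (hpos : ∀ q ∈ Ioo (-a) a, 0 < v q)
    (heven : ∀ q, v (-q) = v q) (hle : ∀ q ∈ Ico 0 a, v q ≤ L * (a - q)) :
    ∃ w : ℝ → ℝ, (∀ x, HasDerivAt w (v (w x)) x) ∧ (∀ x, w x ∈ Ioo (-a) a) ∧
      (∀ x, w (-x) = -w x) ∧ Tendsto w atTop (𝓝 a) ∧ Tendsto w atBot (𝓝 (-a)) := by
  set F : ℝ → ℝ := fun z => timeMap v (squash a z)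
  have hF' (z : ℝ) : HasDerivAt F ((v (squash a z))⁻¹ * (2 * a / π * (1 / (1 + z ^ 2)))) z :=
    (hasDerivAt_timeMap hv hpos (squash_mem_Ioo ha z)).comp z (hasDerivAt_squash a z)
  have hF'_pos (z : ℝ) : 0 < (v (squash a z))⁻¹ * (2 * a / π * (1 / (1 + z ^ 2))) := by
    have := hpos _ (squash_mem_Ioo ha z)
    positivity
  have hF_odd (z : ℝ) : F (-z) = -F z := by simp only [F, squash_neg, timeMap_neg heven]
  have hF_mono : StrictMono F := strictMono_of_deriv_pos fun z => (hF' z).deriv ▸ hF'_pos z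
  have hF_top : Tendsto F atTop atTop := tendsto_timeMap_comp_squash_atTop ha hL hv hpos hle
  have hF_bot : Tendsto F atBot atBot := by
    have : Tendsto (fun z => -F (-z)) atBot atBot :=
      tendsto_neg_atTop_atBot.comp (hF_top.comp tendsto_neg_atBot_atTop)
    simpa only [hF_odd, neg_neg] using this
  let e := hF_mono.orderIsoOfSurjective F
    ((continuous_iff_continuousAt.mpr fun z => (hF' z).continuousAt).surjective hF_top hF_bot)
  have he (x : ℝ) : F (e.symm x) = x := e.apply_symm_apply x
  set w : ℝ → ℝ := fun x => squash a (e.symm x)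
  have hw_odd (x : ℝ) : w (-x) = -w x := by
    simp only [w, ← squash_neg]
    congr 1
    exact hF_mono.injective (by rw [he, hF_odd, he])
  have hw_top : Tendsto w atTop (𝓝 a) :=
    ((tendsto_squash_atTop ha).comp e.symm.tendsto_atTop).mono_right nhdsWithin_le_nhds
  refine ⟨w, fun x => ?_, fun x => squash_mem_Ioo ha _, hw_odd, hw_top, ?_⟩
  · have := (hasDerivAt_squash a _).comp x <| HasDerivAt.of_local_left_inverse
      e.symm.continuous.continuousAt (hF' (e.symm x)) (hF'_pos _).ne' (.of_forall he)
    refine this.congr_deriv ?_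
    have := hpos _ (squash_mem_Ioo ha (e.symm x))
    field_simp
    rfl
  · simpa only [Function.comp_def, hw_odd, neg_neg] using (hw_top.comp tendsto_neg_atBot_atTop).neg

end heteroclinic

/-- With `φX = u₀ - w²`, the first integral of the envelope equations reads
`(φC')² = w² * potential w / γ²`. -/
def potential (B G u₀ lam w : ℝ) : ℝ :=
  2 * B * G * (u₀ - w ^ 2) ^ 2 * (2 * u₀ - w ^ 2) * (G * (u₀ - w ^ 2) ^ 2 + lam)

def velocity (A B G u₀ lam w : ℝ) : ℝ :=
  √(potential B G u₀ lam w) / (2 * (A + 3 * G * (u₀ - w ^ 2) ^ 2))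

section potential

variable {A B G γ u₀ lam : ℝ}

lemma potential_neg (w : ℝ) : potential B G u₀ lam (-w) = potential B G u₀ lam w := by
  simp only [potential, neg_sq]

lemma velocity_neg (w : ℝ) : velocity A B G u₀ lam (-w) = velocity A B G u₀ lam w := by
  simp only [velocity, potential_neg, neg_sq]

lemma potential_pos (hB : 0 < B) (hG : 0 < G) (hlam : 0 < lam) {w : ℝ} (hw : w ^ 2 < u₀) :
    0 < potential B G u₀ lam w := by
  have h1 : 0 < u₀ - w ^ 2 := by linarith
  have h2 : 0 < 2 * u₀ - w ^ 2 := by nlinarith [sq_nonneg w]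
  unfold potential
  positivity

lemma velocity_pos (hA : 0 < A) (hB : 0 < B) (hG : 0 < G) (hlam : 0 < lam) {w : ℝ}
    (hw : w ^ 2 < u₀) : 0 < velocity A B G u₀ lam w := by
  have := potential_pos hB hG hlam hw
  unfold velocity
  positivity

lemma continuous_velocity (hA : 0 < A) (hG : 0 ≤ G) : Continuous (velocity A B G u₀ lam) := by
  refine Continuous.div (by unfold potential; fun_prop) (by fun_prop) fun w => ?_
  positivity

lemma exists_velocity_le_mul_sub (hA : 0 < A) (hB : 0 < B) (hG : 0 < G) (hlam : 0 < lam)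
    (hu₀ : 0 < u₀) :
    ∃ L > 0, ∀ q ∈ Ico 0 √u₀, velocity A B G u₀ lam q ≤ L * (√u₀ - q) := by
  set a := √u₀
  have ha : 0 < a := sqrt_pos.mpr hu₀
  have ha2 : a ^ 2 = u₀ := sq_sqrt hu₀.le
  set K := √(4 * B * G * u₀ * (G * u₀ ^ 2 + lam))
  have hK : 0 < K := sqrt_pos.mpr (by positivity)
  have hK2 : K ^ 2 = 4 * B * G * u₀ * (G * u₀ ^ 2 + lam) := sq_sqrt (by positivity)
  refine ⟨K * a / A, by positivity, fun q ⟨hq0, hqa⟩ => ?_⟩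
  have hX : 0 < u₀ - q ^ 2 := by nlinarith
  have hXle : u₀ - q ^ 2 ≤ u₀ := by nlinarith
  have hpot : potential B G u₀ lam q ≤ (K * (u₀ - q ^ 2)) ^ 2 := by
    have hGX : G * (u₀ - q ^ 2) ^ 2 ≤ G * u₀ ^ 2 := by gcongr
    have h : (2 * u₀ - q ^ 2) * (G * (u₀ - q ^ 2) ^ 2 + lam) ≤
        2 * u₀ * (G * u₀ ^ 2 + lam) :=
      mul_le_mul (by nlinarith) (by linarith) (by positivity) (by positivity)
    calc potential B G u₀ lam q
        = 2 * B * G * (u₀ - q ^ 2) ^ 2 *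
            ((2 * u₀ - q ^ 2) * (G * (u₀ - q ^ 2) ^ 2 + lam)) := by
          unfold potential; ring
      _ ≤ 2 * B * G * (u₀ - q ^ 2) ^ 2 * (2 * u₀ * (G * u₀ ^ 2 + lam)) := by gcongr
      _ = (K * (u₀ - q ^ 2)) ^ 2 := by rw [mul_pow, hK2]; ring
  calc velocity A B G u₀ lam q ≤ K * (u₀ - q ^ 2) / (2 * A) := by
        unfold velocity
        gcongr
        · exact sqrt_le_iff.mpr ⟨by positivity, hpot⟩
        · nlinarith [sq_nonneg (u₀ - q ^ 2)]
    _ ≤ K * a / A * (a - q) := by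
        have h : u₀ - q ^ 2 ≤ 2 * a * (a - q) := by nlinarith
        rw [div_mul_eq_mul_div, div_le_div_iff₀ (by positivity) hA]
        nlinarith [mul_le_mul_of_nonneg_left h (mul_pos hK hA).le]

/-- The second envelope equation in the variable `w`. -/
lemma two_mul_potential_add_mul_deriv
    (h_prod : B * (G * u₀ ^ 2) * lam = (γ ^ 2 - A * B) * A)
    (h_diff : 2 * B * (G * u₀ ^ 2 - lam) = 3 * (γ ^ 2 - A * B) - A * B)
    {w P' : ℝ} (hP' : HasDerivAt (potential B G u₀ lam) P' w) :
    2 * potential B G u₀ lam w + w * P' =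
      -8 * ((γ ^ 2 - A * B) * (u₀ - w ^ 2) - B * G * (u₀ - w ^ 2) ^ 3) *
        (A + 3 * G * (u₀ - w ^ 2) ^ 2) := by
  have hX := (hasDerivAt_pow 2 w).const_sub u₀
  have hY := (hasDerivAt_pow 2 w).const_sub (2 * u₀)
  have h := (((hX.pow 2).const_mul (2 * B * G)).mul hY).mul
    (((hX.pow 2).const_mul G).add_const lam)
  rw [hP'.unique h, potential]
  norm_num
  linear_combination (-8 * (u₀ - w ^ 2)) * h_prod - (8 * G * (u₀ - w ^ 2) ^ 3) * h_diff

end potential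

section profile

variable {A B G γ u₀ lam : ℝ} {w : ℝ → ℝ}

lemma hasDerivAt_cubic_comp (hA : 0 < A) (hG : 0 ≤ G)
    (hw : ∀ x, HasDerivAt w (velocity A B G u₀ lam (w x)) x) (x : ℝ) :
    HasDerivAt (fun x => (A * (u₀ - w x ^ 2) + G * (u₀ - w x ^ 2) ^ 3) / γ)
      (-(w x * √(potential B G u₀ lam (w x))) / γ) x := by
  have hX := ((hw x).pow 2).const_sub u₀
  refine ((hX.const_mul A).add ((hX.pow 3).const_mul G)).div_const γ |>.congr_deriv ?_
  have : 0 < A + 3 * G * (u₀ - w x ^ 2) ^ 2 := by positivity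
  unfold velocity
  field_simp
  simp only [Pi.pow_apply]
  ring

lemma hasDerivAt_neg_mul_sqrt_potential (hA : 0 < A) (hB : 0 < B) (hG : 0 < G) (hlam : 0 < lam)
    (h_prod : B * (G * u₀ ^ 2) * lam = (γ ^ 2 - A * B) * A)
    (h_diff : 2 * B * (G * u₀ ^ 2 - lam) = 3 * (γ ^ 2 - A * B) - A * B)
    (hw : ∀ x, HasDerivAt w (velocity A B G u₀ lam (w x)) x) {x : ℝ} (hwx : w x ^ 2 < u₀) :
    HasDerivAt (fun x => -(w x * √(potential B G u₀ lam (w x))) / γ)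
      (2 / γ * ((γ ^ 2 - A * B) * (u₀ - w x ^ 2) - B * G * (u₀ - w x ^ 2) ^ 3)) x := by
  have hP : 0 < potential B G u₀ lam (w x) := potential_pos hB hG hlam hwx
  have hP' : HasDerivAt (potential B G u₀ lam) (deriv (potential B G u₀ lam) (w x)) (w x) :=
    DifferentiableAt.hasDerivAt (by unfold potential; fun_prop)
  have key := two_mul_potential_add_mul_deriv h_prod h_diff hP'
  have hs := sq_sqrt hP.le
  refine (((hw x).mul ((hP'.comp x (hw x)).sqrt hP.ne')).neg.div_const γ).congr_deriv ?_
  simp only [velocity, Function.comp_apply]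
  field_simp
  rw [hs, ← neg_div]
  congr 1
  linear_combination -key

lemma contDiff_cubic_comp (hA : 0 < A) (hB : 0 < B) (hG : 0 < G) (hlam : 0 < lam)
    (h_prod : B * (G * u₀ ^ 2) * lam = (γ ^ 2 - A * B) * A)
    (h_diff : 2 * B * (G * u₀ ^ 2 - lam) = 3 * (γ ^ 2 - A * B) - A * B)
    (hw : ∀ x, HasDerivAt w (velocity A B G u₀ lam (w x)) x) (hw_sq : ∀ x, w x ^ 2 < u₀) :
    ContDiff ℝ 2 (fun x => (A * (u₀ - w x ^ 2) + G * (u₀ - w x ^ 2) ^ 3) / γ) := by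
  have hw_cont : Continuous w := continuous_iff_continuousAt.mpr fun x => (hw x).continuousAt
  exact contDiff_two_of_hasDerivAt (hasDerivAt_cubic_comp hA hG.le hw)
    (fun x => hasDerivAt_neg_mul_sqrt_potential hA hB hG hlam h_prod h_diff hw (hw_sq x))
    (by fun_prop)

lemma deriv_deriv_cubic_comp (hA : 0 < A) (hB : 0 < B) (hG : 0 < G) (hlam : 0 < lam)
    (h_prod : B * (G * u₀ ^ 2) * lam = (γ ^ 2 - A * B) * A)
    (h_diff : 2 * B * (G * u₀ ^ 2 - lam) = 3 * (γ ^ 2 - A * B) - A * B)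
    (hw : ∀ x, HasDerivAt w (velocity A B G u₀ lam (w x)) x) (hw_sq : ∀ x, w x ^ 2 < u₀)
    (x : ℝ) :
    deriv (deriv fun x => (A * (u₀ - w x ^ 2) + G * (u₀ - w x ^ 2) ^ 3) / γ) x =
      2 / γ * ((γ ^ 2 - A * B) * (u₀ - w x ^ 2) - B * G * (u₀ - w x ^ 2) ^ 3) := by
  rw [show deriv _ = _ from funext fun x => (hasDerivAt_cubic_comp hA hG.le hw x).deriv]
  exact (hasDerivAt_neg_mul_sqrt_potential hA hB hG hlam h_prod h_diff hw (hw_sq x)).deriv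

end profile

theorem exists_bright_profile {A B G γ ρ₀ lam : ℝ} (hA : 0 < A) (hB : 0 < B) (hG : 0 < G)
    (hγ : γ ≠ 0) (hρ₀ : 0 < ρ₀) (hlam : 0 < lam)
    (h_prod : B * ρ₀ * lam = (γ ^ 2 - A * B) * A)
    (h_diff : 2 * B * (ρ₀ - lam) = 3 * (γ ^ 2 - A * B) - A * B) :
    ∃ φX φC : ℝ → ℝ, ContDiff ℝ 1 φX ∧ ContDiff ℝ 2 φC ∧
      (∀ x, (-G * φX x ^ 2 - A) * φX x + γ * φC x = 0) ∧
      (∀ x, -(1 / 2) * deriv (deriv φC) x - B * φC x + γ * φX x = 0) ∧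
      (∀ x, φX (-x) = φX x) ∧ (∀ x, φC (-x) = φC x) ∧
      (∃ M, ∀ x, |φX x| ≤ M) ∧ (∃ M, ∀ x, |φC x| ≤ M) ∧
      Tendsto φX atTop (𝓝 0) ∧ Tendsto φX atBot (𝓝 0) ∧
      Tendsto φC atTop (𝓝 0) ∧ Tendsto φC atBot (𝓝 0) ∧
      ∃ x₀, (∀ x, G * φX x ^ 2 ≤ G * φX x₀ ^ 2) ∧ G * φX x₀ ^ 2 = ρ₀ := by
  set u₀ := √(ρ₀ / G)
  have hu₀ : 0 < u₀ := sqrt_pos.mpr (div_pos hρ₀ hG)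
  have hGu₀ : G * u₀ ^ 2 = ρ₀ := by rw [sq_sqrt (div_pos hρ₀ hG).le]; field_simp
  rw [← hGu₀] at h_prod h_diff
  obtain ⟨L, hL, hle⟩ := exists_velocity_le_mul_sub hA hB hG hlam hu₀
  obtain ⟨w, hw, hw_mem, hw_odd, hw_top, hw_bot⟩ :=
    exists_odd_heteroclinic (sqrt_pos.mpr hu₀) hL (continuous_velocity hA hG.le).continuousOn
      (fun q hq => velocity_pos hA hB hG hlam (sq_lt.mpr hq)) velocity_neg hle
  have hw_sq (x : ℝ) : w x ^ 2 < u₀ := sq_lt.mpr (hw_mem x)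
  set φX : ℝ → ℝ := fun x => u₀ - w x ^ 2
  have hφX_pos (x : ℝ) : 0 < φX x := sub_pos.mpr (hw_sq x)
  have hφX_le (x : ℝ) : φX x ≤ u₀ := sub_le_self _ (sq_nonneg _)
  have hw_zero : w 0 = 0 := self_eq_neg.mp (by simpa using hw_odd 0)
  have hφX_zero : φX 0 = u₀ := by simp [φX, hw_zero]
  have hφX_even (x : ℝ) : φX (-x) = φX x := by simp only [φX, hw_odd, neg_sq]
  have hφX_lim {l : Filter ℝ} {b : ℝ} (h : Tendsto w l (𝓝 b)) (hb : b ^ 2 = u₀) :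
      Tendsto φX l (𝓝 0) := by
    simpa [hb] using (tendsto_const_nhds (x := u₀)).sub (h.pow 2)
  set φC : ℝ → ℝ := fun x => (A * φX x + G * φX x ^ 3) / γ
  have hφC_lim {l : Filter ℝ} (h : Tendsto φX l (𝓝 0)) : Tendsto φC l (𝓝 0) := by
    simpa using ((h.const_mul A).add ((h.pow 3).const_mul G)).div_const γ
  have hφX_top := hφX_lim hw_top (sq_sqrt hu₀.le)
  have hφX_bot := hφX_lim hw_bot (by rw [neg_sq, sq_sqrt hu₀.le])
  refine ⟨φX, φC, ?_, contDiff_cubic_comp hA hB hG hlam h_prod h_diff hw hw_sq, fun x => ?_,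
    fun x => ?_, hφX_even, fun x => by simp only [φC, hφX_even], ⟨u₀, fun x => ?_⟩,
    ⟨(A * u₀ + G * u₀ ^ 3) / |γ|, fun x => ?_⟩, hφX_top, hφX_bot, hφC_lim hφX_top,
    hφC_lim hφX_bot, 0, fun x => ?_, by rw [hφX_zero, hGu₀]⟩
  · have hw_cont : Continuous w := continuous_iff_continuousAt.mpr fun x => (hw x).continuousAt
    exact contDiff_const.sub
      ((contDiff_one_of_hasDerivAt hw ((continuous_velocity hA hG.le).comp hw_cont)).pow 2)
  · simp only [φC]
    field_simp
    ring
  · rw [deriv_deriv_cubic_comp hA hB hG hlam h_prod h_diff hw hw_sq]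
    simp only [φC]
    field_simp
    ring
  · exact abs_le.mpr ⟨by linarith [hφX_pos x], hφX_le x⟩
  · have := hφX_pos x
    have := hφX_le x
    have h1 : 0 ≤ A * φX x + G * φX x ^ 3 := by positivity
    have h2 : A * φX x + G * φX x ^ 3 ≤ A * u₀ + G * u₀ ^ 3 := by gcongr
    rw [abs_div, abs_of_nonneg h1]
    gcongr
  · rw [hφX_zero]
    have := hφX_pos x
    have := hφX_le x
    gcongr

/-- `ρ₀` and `-lam` are the roots of `2Bρ² - (3(γ² - AB) - AB)ρ - 2A(γ² - AB)`, whose positive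
root is the peak value `G u₀²` of `G φX²` at the turning point. -/
lemma exists_vieta_pair {A B γ : ℝ} (hA : 0 < A) (hB : 0 < B) (hAB : A * B < γ ^ 2) :
    ∃ ρ₀ lam : ℝ, 0 < ρ₀ ∧ 0 < lam ∧ B * ρ₀ * lam = (γ ^ 2 - A * B) * A ∧
      2 * B * (ρ₀ - lam) = 3 * (γ ^ 2 - A * B) - A * B ∧
      ρ₀ = -A + γ ^ 2 / B * (3 / 4 + √(9 / 16 - A * B / (2 * γ ^ 2))) := by
  have hγ2 : 0 < γ ^ 2 := (mul_pos hA hB).trans hAB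
  have hγ : γ ≠ 0 := by rintro rfl; simp at hγ2
  set s := √(9 / 16 - A * B / (2 * γ ^ 2))
  have hs2 : γ ^ 2 * s ^ 2 = 9 / 16 * γ ^ 2 - A * B / 2 := by
    rw [sq_sqrt (by rw [sub_nonneg, div_le_iff₀ (by positivity)]; linarith)]
    field_simp
  have hkey : (γ ^ 2 * s) ^ 2 - (3 / 4 * γ ^ 2 - A * B) ^ 2 = A * B * (γ ^ 2 - A * B) := by
    linear_combination γ ^ 2 * hs2
  have hsq : (3 / 4 * γ ^ 2 - A * B) ^ 2 < (γ ^ 2 * s) ^ 2 := by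
    nlinarith [mul_pos (mul_pos hA hB) (sub_pos.mpr hAB)]
  obtain ⟨hlt₁, hlt₂⟩ := abs_lt.mp (abs_lt_of_sq_lt_sq hsq (by positivity))
  refine ⟨-A + γ ^ 2 / B * (3 / 4 + s), A + γ ^ 2 / B * (s - 3 / 4), ?_, ?_, ?_, ?_, rfl⟩
  · rw [show -A + γ ^ 2 / B * (3 / 4 + s) = (γ ^ 2 * (3 / 4 + s) - A * B) / B by
      field_simp; ring]
    exact div_pos (by linarith) hB
  · rw [show A + γ ^ 2 / B * (s - 3 / 4) = (γ ^ 2 * (s - 3 / 4) + A * B) / B by field_simp; ring]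
    exact div_pos (by linarith) hB
  · field_simp
    linear_combination 16 * hkey
  · field_simp
    ring

end

theorem bright_soliton_band_2_2_general
    (ω ωX ωC γ g : ℝ) (hγ : γ ≠ 0) (hg : g < 0)
    (hω : ω > max ωX ωC)
    (hband₂ : (ω - ωX) * (ω - ωC) < γ ^ 2) :
    ∃ φX φC : ℝ → ℝ,
      ContDiff ℝ 1 φX ∧ ContDiff ℝ 2 φC ∧
      (∀ x : ℝ, (g * φX x ^ 2 - (ω - ωX)) * φX x + γ * φC x = 0) ∧
      (∀ x : ℝ, -(1/2) * deriv (deriv φC) x - (ω - ωC) * φC x + γ * φX x = 0) ∧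
      (∀ x : ℝ, φX (-x) = φX x) ∧ (∀ x : ℝ, φC (-x) = φC x) ∧
      (∃ M : ℝ, ∀ x : ℝ, |φX x| ≤ M) ∧ (∃ M : ℝ, ∀ x : ℝ, |φC x| ≤ M) ∧
      Tendsto φX atTop (nhds 0) ∧ Tendsto φX atBot (nhds 0) ∧
      Tendsto φC atTop (nhds 0) ∧ Tendsto φC atBot (nhds 0) ∧
      (∃ x₀ : ℝ, (∀ x : ℝ, |g| * φX x ^ 2 ≤ |g| * φX x₀ ^ 2) ∧
        |g| * φX x₀ ^ 2 = -(ω - ωX) + (γ ^ 2 / (ω - ωC)) *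
          (3/4 + Real.sqrt (9/16 - (ω - ωX) * (ω - ωC) / (2 * γ ^ 2)))) := by
  obtain ⟨hωX, hωC⟩ := max_lt_iff.mp hω
  have hA : 0 < ω - ωX := sub_pos.mpr hωX
  have hB : 0 < ω - ωC := sub_pos.mpr hωC
  obtain ⟨ρ₀, lam, hρ₀, hlam, h_prod, h_diff, hρ₀_eq⟩ :=
    exists_vieta_pair hA hB hband₂
  obtain ⟨φX, φC, hX, hC, heqX, heqC, hX_even, hC_even, hX_bdd, hC_bdd, hX_top, hX_bot, hC_top,
    hC_bot, x₀, hx₀_max, hx₀_val⟩ :=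
    exists_bright_profile hA hB (neg_pos.mpr hg) hγ hρ₀ hlam h_prod h_diff
  rw [abs_of_neg hg, ← hρ₀_eq]
  exact ⟨φX, φC, hX, hC, by simpa only [neg_neg] using heqX, heqC, hX_even, hC_even, hX_bdd,
    hC_bdd, hX_top, hX_bot, hC_top, hC_bot, x₀, hx₀_max, hx₀_val⟩

/-- Band 2.2: existence of bright solitons for `g < 0` and `ω > max(ωX, ωC)`,
`0 < ϖX·ϖC < γ²`: even bounded envelopes vanishing at the far field, with the
stated attained peak value of `|g|·φX²`. -/
theorem bright_soliton_band_2_2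
    (ω ωX ωC γ g : ℝ) (hγ : γ ≠ 0) (hg : g < 0)
    (hω : ω > max ωX ωC)
    (hband₁ : 0 < (ω - ωX) * (ω - ωC)) (hband₂ : (ω - ωX) * (ω - ωC) < γ ^ 2) :
    ∃ φX φC : ℝ → ℝ,
      ContDiff ℝ 1 φX ∧ ContDiff ℝ 2 φC ∧
      (∀ x : ℝ, (g * φX x ^ 2 - (ω - ωX)) * φX x + γ * φC x = 0) ∧
      (∀ x : ℝ, -(1/2) * deriv (deriv φC) x - (ω - ωC) * φC x + γ * φX x = 0) ∧
      (∀ x : ℝ, φX (-x) = φX x) ∧ (∀ x : ℝ, φC (-x) = φC x) ∧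
      (∃ M : ℝ, ∀ x : ℝ, |φX x| ≤ M) ∧ (∃ M : ℝ, ∀ x : ℝ, |φC x| ≤ M) ∧
      Tendsto φX atTop (nhds 0) ∧ Tendsto φX atBot (nhds 0) ∧
      Tendsto φC atTop (nhds 0) ∧ Tendsto φC atBot (nhds 0) ∧
      (∃ x₀ : ℝ, (∀ x : ℝ, |g| * φX x ^ 2 ≤ |g| * φX x₀ ^ 2) ∧
        |g| * φX x₀ ^ 2 = -(ω - ωX) + (γ ^ 2 / (ω - ωC)) *
          (3/4 + Real.sqrt (9/16 - (ω - ωX) * (ω - ωC) / (2 * γ ^ 2)))) :=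
  bright_soliton_band_2_2_general ω ωX ωC γ g hγ hg hω hband₂
end

section
/- Let ω, ω_X, ω_C, γ, g be real numbers with γ ≠ 0, g > 0, and ω_X < ω < ω_C (band 3.2). Then there exist odd functions φ_X, φ_C : ℝ → ℝ such that: φ_C is continuously differentiable on ℝ with φ_C(0) = 0 and is twice differentiable at every x ≠ 0; the pair (φ_X, φ_C) satisfies the stationary polariton envelope equations at every x ≠ 0; φ_X(x) → √(ϖ_X/g) as x → 0 from the right (so φ_X has a jump discontinuity at 0); the function x ↦ φ_X(x)² is strictly increasing on (0, ∞); and φ_X(x)² → (ϖ_X − γ²/ϖ_C)/g as x → +∞. -/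
/-!
Solving the first envelope equation for the cavity field gives `φC = ψ φX` with
`ψ t = (ϖX t - g t³) / γ`. Multiplying the second equation by `φC'` gives a first integral; with
the constant chosen so that `φC'` vanishes at the far-field amplitude `s = √((ϖX - γ²/ϖC)/g)`, it
reads `φC' = W φX` with `W t = -(ϖX - γ²/ϖC - g t²) √(γ²/g - 2 ϖC t²) / γ`. Since
`φC' = ψ'(φX) φX'`, the exciton envelope solves the autonomous equation `φX' = F φX`, `F = W / ψ'`.
On `x > 0` we take the solution leaving the zero `a = √(ϖX/g)` of `ψ` and increasing towards `s`:
it is the inverse of `t ↦ ∫ₐᵗ dτ / F τ`, which diverges as `t → s` because `F` vanishes linearly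
there, so `s` is approached only as `x → ∞`. The odd extensions of `φX` and `ψ ∘ φX` solve the
equations on `x ≠ 0`, and `φC` is `C¹` across `0` because `ψ (±a) = 0` and `W` is even.
-/

open Filter Set Topology

structure IsMonotoneOrbit (F : ℝ → ℝ) (a s : ℝ) (u : ℝ → ℝ) : Prop where
  map_zero : u 0 = a
  continuousOn : ContinuousOn u (Ici 0)
  strictMonoOn : StrictMonoOn u (Ici 0)
  mapsTo : MapsTo u (Ioi 0) (Ioo a s)
  hasDerivAt : ∀ x > 0, HasDerivAt u (F (u x)) x
  tendsto_atTop : Tendsto u atTop (𝓝 s)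

section Quadrature

variable {F : ℝ → ℝ} {a s : ℝ}

theorem tendsto_sub_nhdsLT_nhdsGT_zero (s : ℝ) : Tendsto (fun t => s - t) (𝓝[<] s) (𝓝[>] 0) :=
  tendsto_nhdsWithin_of_tendsto_nhds_of_eventually_within _
    (tendsto_nhdsWithin_of_tendsto_nhds (by simpa using (continuous_sub_left s).tendsto s))
    (eventually_nhdsWithin_of_forall fun t ht => show 0 < s - t from sub_pos.2 ht)

theorem integral_inv_const_mul_sub {K t : ℝ} (ht : t < s) (hat : a ≤ t) :
    ∫ τ in a..t, (K * (s - τ))⁻¹ = K⁻¹ * Real.log ((s - a) / (s - t)) := by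
  simp_rw [mul_inv]
  rw [intervalIntegral.integral_const_mul, intervalIntegral.integral_comp_sub_left (·⁻¹) s,
    integral_inv]
  rw [uIcc_of_le (by linarith)]
  exact fun h => (sub_pos.2 ht).not_ge h.1

theorem tendsto_integral_inv_atTop_of_le_mul_sub {K : ℝ} (has : a < s) (hK : 0 < K)
    (hF : ContinuousOn F (Ico a s)) (hpos : ∀ t ∈ Ico a s, 0 < F t)
    (hle : ∀ t ∈ Ico a s, F t ≤ K * (s - t)) :
    Tendsto (fun t => ∫ τ in a..t, (F τ)⁻¹) (𝓝[<] s) atTop := by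
  have hlog : Tendsto (fun t => K⁻¹ * Real.log ((s - a) / (s - t))) (𝓝[<] s) atTop := by
    simp_rw [div_eq_mul_inv]
    exact (Real.tendsto_log_atTop.comp ((tendsto_inv_nhdsGT_zero.comp
      (tendsto_sub_nhdsLT_nhdsGT_zero s)).const_mul_atTop (sub_pos.2 has))).const_mul_atTop
      (inv_pos.2 hK)
  refine tendsto_atTop_mono' _ ?_ hlog
  filter_upwards [Ioo_mem_nhdsLT has] with t ht
  have hsub : Icc a t ⊆ Ico a s := Icc_subset_Ico_right ht.2
  rw [← integral_inv_const_mul_sub ht.2 ht.1.le]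
  refine intervalIntegral.integral_mono_on ht.1.le ?_ ?_
    fun τ hτ => inv_anti₀ (hpos τ (hsub hτ)) (hle τ (hsub hτ))
  all_goals refine ContinuousOn.intervalIntegrable ?_; rw [uIcc_of_le ht.1.le]
  · exact ContinuousOn.inv₀ (by fun_prop) fun τ hτ => (mul_pos hK (sub_pos.2 (hsub hτ).2)).ne'
  · exact (hF.mono hsub).inv₀ fun τ hτ => (hpos τ (hsub hτ)).ne'

theorem StrictMonoOn.continuousOn_Ici_of_image_eq_Ico {u : ℝ → ℝ}
    (hmono : StrictMonoOn u (Ici 0)) (himage : u '' Ici 0 = Ico (u 0) s) :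
    ContinuousOn u (Ici 0) := by
  have hs : u 0 < s := (himage ▸ mem_image_of_mem u self_mem_Ici : u 0 ∈ Ico (u 0) s).2
  intro x (hx : 0 ≤ x)
  rcases hx.eq_or_lt with rfl | hx
  · exact continuousWithinAt_right_of_monotoneOn_of_image_mem_nhdsWithin hmono.monotoneOn
      self_mem_nhdsWithin (himage ▸ Ico_mem_nhdsGE hs)
  · have hux : u x ∈ Ico (u 0) s := himage ▸ mem_image_of_mem u (mem_Ici.2 hx.le)
    exact (continuousAt_of_monotoneOn_of_image_mem_nhds hmono.monotoneOn (Ici_mem_nhds hx)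
      (himage ▸ Ico_mem_nhds (hmono self_mem_Ici (mem_Ici.2 hx.le) hx) hux.2)).continuousWithinAt

theorem MonotoneOn.tendsto_atTop_of_image_eq_Ico {u : ℝ → ℝ} (hmono : MonotoneOn u (Ici 0))
    (himage : u '' Ici 0 = Ico a s) : Tendsto u atTop (𝓝 s) := by
  refine tendsto_order.2 ⟨fun b hb => ?_, fun b hb => ?_⟩
  · obtain ⟨c, hbc, hcs⟩ := exists_between hb
    have h0 : u 0 ∈ Ico a s := himage ▸ mem_image_of_mem u self_mem_Ici
    have ha : a < s := h0.1.trans_lt h0.2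
    obtain ⟨x₀, hx₀, hux₀⟩ : max a c ∈ u '' Ici 0 :=
      himage ▸ ⟨le_max_left a c, max_lt ha hcs⟩
    filter_upwards [eventually_ge_atTop x₀] with x hx
    exact (hbc.trans_le (le_max_right a c)).trans_le
      (hux₀ ▸ hmono hx₀ (mem_Ici.2 ((mem_Ici.1 hx₀).trans hx)) hx)
  · filter_upwards [eventually_ge_atTop 0] with x hx
    exact ((himage ▸ mem_image_of_mem u (mem_Ici.2 hx) : u x ∈ Ico a s).2).trans hb

theorem exists_isMonotoneOrbit_of_inverse {H H' : ℝ → ℝ} (hmono : StrictMonoOn H (Ico a s))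
    (hsurj : SurjOn H (Ico a s) (Ici 0)) (hHa : H a = 0)
    (hderiv : ∀ t ∈ Ioo a s, HasDerivAt H (H' t) t) (hH' : ∀ t ∈ Ioo a s, H' t ≠ 0) :
    ∃ u, IsMonotoneOrbit (fun t => (H' t)⁻¹) a s u := by
  obtain ⟨t₀, ht₀, -⟩ := hsurj (self_mem_Ici (a := (0 : ℝ)))
  have ha : a ∈ Ico a s := left_mem_Ico.2 (ht₀.1.trans_lt ht₀.2)
  set u := Function.invFunOn H (Ico a s)
  have hu : ∀ x ≥ 0, u x ∈ Ico a s ∧ H (u x) = x := fun x hx => Function.invFunOn_pos (hsurj hx)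
  have hHu : ∀ t ∈ Ico a s, u (H t) = t := hmono.injOn.leftInvOn_invFunOn
  have hu0 : u 0 = a := by simpa [hHa] using hHu a ha
  have himage : u '' Ici 0 = Ico a s :=
    (MapsTo.image_subset fun x hx => (hu x hx).1).antisymm fun t ht =>
      ⟨H t, hHa ▸ hmono.monotoneOn ha ht ht.1, hHu t ht⟩
  have hu_mono : StrictMonoOn u (Ici 0) := fun x hx y hy hxy => by
    rwa [← hmono.lt_iff_lt (hu x hx).1 (hu y hy).1, (hu x hx).2, (hu y hy).2]
  have hmaps : MapsTo u (Ioi 0) (Ioo a s) := fun x hx =>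
    ⟨hu0 ▸ hu_mono self_mem_Ici (mem_Ici.2 (le_of_lt hx)) hx, (hu x (le_of_lt hx)).1.2⟩
  have hcont := hu_mono.continuousOn_Ici_of_image_eq_Ico (hu0 ▸ himage)
  refine ⟨u, hu0, hcont, hu_mono, hmaps, fun x hx => ?_,
    hu_mono.monotoneOn.tendsto_atTop_of_image_eq_Ico himage⟩
  refine (hderiv _ (hmaps hx)).of_local_left_inverse (hcont.continuousAt (Ici_mem_nhds hx))
    (hH' _ (hmaps hx)) ?_
  filter_upwards [Ici_mem_nhds hx] with y hy using (hu y hy).2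

theorem exists_isMonotoneOrbit_of_tendsto_integral_inv (has : a < s)
    (hF : ContinuousOn F (Ico a s)) (hpos : ∀ t ∈ Ico a s, 0 < F t)
    (hdiv : Tendsto (fun t => ∫ τ in a..t, (F τ)⁻¹) (𝓝[<] s) atTop) :
    ∃ u, IsMonotoneOrbit F a s u := by
  set H := fun t => ∫ τ in a..t, (F τ)⁻¹
  have hFinv : ContinuousOn (fun t => (F t)⁻¹) (Ico a s) := hF.inv₀ fun t ht => (hpos t ht).ne'
  have hint : ∀ t ∈ Ico a s, ∀ t' ∈ Ico a s,
      IntervalIntegrable (fun t => (F t)⁻¹) MeasureTheory.volume t t' :=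
    fun t ht t' ht' => (hFinv.mono (ordConnected_Ico.uIcc_subset ht ht')).intervalIntegrable
  have ha : a ∈ Ico a s := left_mem_Ico.2 has
  have hmono : StrictMonoOn H (Ico a s) := fun t ht t' ht' htt' => by
    rw [← sub_pos]
    simp only [H]
    rw [intervalIntegral.integral_interval_sub_left (hint a ha t' ht') (hint a ha t ht)]
    exact intervalIntegral.intervalIntegral_pos_of_pos_on (hint t ht t' ht')
      (fun τ hτ => inv_pos.2 (hpos τ ⟨ht.1.trans hτ.1.le, hτ.2.trans ht'.2⟩)) htt'
  have hsurj : SurjOn H (Ico a s) (Ici 0) := fun x hx => by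
    obtain ⟨t, hxt, ht⟩ := ((hdiv.eventually_gt_atTop x).and (Ioo_mem_nhdsLT has)).exists
    have hcont : ContinuousOn H (Icc a t) := by
      simpa [uIcc_of_le ht.1.le] using intervalIntegral.continuousOn_primitive_interval'
        (hint a ha t (Ioo_subset_Ico_self ht)) left_mem_uIcc
    obtain ⟨t', ht', rfl⟩ := intermediate_value_Icc ht.1.le hcont
      ⟨by simpa [H] using hx, hxt.le⟩
    exact ⟨t', ⟨ht'.1, ht'.2.trans_lt ht.2⟩, rfl⟩
  have hderiv : ∀ t ∈ Ioo a s, HasDerivAt H (F t)⁻¹ t := fun t ht =>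
    intervalIntegral.integral_hasDerivAt_right (hint a ha t (Ioo_subset_Ico_self ht))
      ((hFinv.mono Ioo_subset_Ico_self).stronglyMeasurableAtFilter isOpen_Ioo t ht)
      (hFinv.continuousAt (Ico_mem_nhds ht.1 ht.2))
  simpa using exists_isMonotoneOrbit_of_inverse hmono hsurj intervalIntegral.integral_same
    hderiv fun t ht => inv_ne_zero (hpos t (Ioo_subset_Ico_self ht)).ne'

end Quadrature

section OddExtension

noncomputable def oddExtension (v : ℝ → ℝ) (x : ℝ) : ℝ := SignType.sign x * v |x|

variable {v w : ℝ → ℝ}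

theorem oddExtension_neg (v : ℝ → ℝ) (x : ℝ) : oddExtension v (-x) = -oddExtension v x := by
  simp [oddExtension, Left.sign_neg]

theorem oddExtension_of_pos {x : ℝ} (hx : 0 < x) : oddExtension v x = v x := by
  simp [oddExtension, sign_pos hx, abs_of_pos hx]

theorem oddExtension_zero : oddExtension v 0 = 0 := by simp [oddExtension]

theorem abs_oddExtension_le (x : ℝ) : |oddExtension v x| ≤ |v (|x|)| := by
  rcases lt_trichotomy x 0 with hx | rfl | hx <;> simp [oddExtension, sign_neg, sign_pos, *]

theorem sign_mul_sign_of_ne_zero {x : ℝ} (hx : x ≠ 0) :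
    (SignType.sign x : ℝ) * SignType.sign x = 1 := by
  rw [← SignType.coe_mul, ← sign_mul, sign_pos (mul_self_pos.2 hx), SignType.coe_one]

theorem hasDerivAt_oddExtension_of_ne_zero {x v' : ℝ} (hx : x ≠ 0) (h : HasDerivAt v v' |x|) :
    HasDerivAt (oddExtension v) v' x := by
  have hsign : ∀ᶠ y in 𝓝 x, SignType.sign y = SignType.sign x := by
    rcases hx.lt_or_gt with hx | hx
    · filter_upwards [Iio_mem_nhds hx] with y hy using by rw [sign_neg hy, sign_neg hx]
    · filter_upwards [Ioi_mem_nhds hx] with y hy using by rw [sign_pos hy, sign_pos hx]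
  have := ((h.comp x (hasDerivAt_abs hx)).const_mul (SignType.sign x : ℝ)).congr_of_eventuallyEq
    (hsign.mono fun y hy => show oddExtension v y = _ by rw [oddExtension, hy]; rfl)
  refine this.congr_deriv ?_
  rw [mul_comm v', ← mul_assoc, sign_mul_sign_of_ne_zero hx, one_mul]

theorem hasDerivAt_oddExtension (hv : ∀ x > 0, HasDerivAt v (w x) x)
    (hv0 : ContinuousWithinAt v (Ici 0) 0) (hv00 : v 0 = 0) (hw : ContinuousOn w (Ici 0))
    (x : ℝ) : HasDerivAt (oddExtension v) (w |x|) x := by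
  refine hasDerivAt_of_hasDerivAt_of_ne' (fun y hy =>
    hasDerivAt_oddExtension_of_ne_zero hy (hv _ (abs_pos.2 hy))) ?_
    (hw.comp_continuous continuous_abs abs_nonneg).continuousAt x
  have hvabs : Tendsto (fun y => v |y|) (𝓝 0) (𝓝 0) := by
    simpa [hv00, Function.comp_def] using (hv0.comp_of_eq continuous_abs.continuousWithinAt
      (fun y (_ : y ∈ univ) => abs_nonneg y) abs_zero).tendsto
  rw [ContinuousAt, oddExtension_zero]
  exact squeeze_zero_norm abs_oddExtension_le (by simpa using hvabs.abs)

end OddExtension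

namespace IsMonotoneOrbit

variable {F : ℝ → ℝ} {a s : ℝ} {u : ℝ → ℝ}

theorem tendsto_oddExtension_nhdsGT (hu : IsMonotoneOrbit F a s u) :
    Tendsto (oddExtension u) (𝓝[>] 0) (𝓝 a) :=
  hu.map_zero ▸ ((hu.continuousOn 0 self_mem_Ici).mono Ioi_subset_Ici_self).tendsto.congr'
    (eventually_nhdsWithin_of_forall fun _ hx => (oddExtension_of_pos hx).symm)

theorem strictMonoOn_sq_oddExtension (hu : IsMonotoneOrbit F a s u) (ha : 0 ≤ a) :
    StrictMonoOn (fun x => oddExtension u x ^ 2) (Ioi 0) := fun x hx y hy hxy => by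
  simp only [oddExtension_of_pos hx, oddExtension_of_pos hy]
  exact pow_lt_pow_left₀ (hu.strictMonoOn (mem_Ici.2 (le_of_lt hx)) (mem_Ici.2 (le_of_lt hy)) hxy)
    (ha.trans (hu.mapsTo hx).1.le) two_ne_zero

theorem tendsto_sq_oddExtension_atTop (hu : IsMonotoneOrbit F a s u) :
    Tendsto (fun x => oddExtension u x ^ 2) atTop (𝓝 (s ^ 2)) :=
  (hu.tendsto_atTop.pow 2).congr'
    ((eventually_gt_atTop 0).mono fun _ hx => by simp only [oddExtension_of_pos hx])

end IsMonotoneOrbit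

namespace Polariton

variable (ϖX ϖC γ g : ℝ)

noncomputable def cavityOfExciton (t : ℝ) : ℝ := (ϖX * t - g * t ^ 3) / γ

noncomputable def cavitySlope (t : ℝ) : ℝ :=
  -((ϖX - γ ^ 2 / ϖC - g * t ^ 2) * √(γ ^ 2 / g - 2 * ϖC * t ^ 2)) / γ

noncomputable def excitonField (t : ℝ) : ℝ :=
  (ϖX - γ ^ 2 / ϖC - g * t ^ 2) * √(γ ^ 2 / g - 2 * ϖC * t ^ 2) / (3 * g * t ^ 2 - ϖX)

variable {ϖX ϖC γ g}

theorem exciton_equation_cavityOfExciton (hγ : γ ≠ 0) (t : ℝ) :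
    (g * t ^ 2 - ϖX) * t + γ * cavityOfExciton ϖX γ g t = 0 := by
  rw [cavityOfExciton]; field_simp; ring

theorem cavityOfExciton_eq_zero {a : ℝ} (ha : g * a ^ 2 = ϖX) : cavityOfExciton ϖX γ g a = 0 := by
  rw [cavityOfExciton, ← ha]; ring

theorem radicand_pos (hγ : γ ≠ 0) (hg : 0 < g) (hC : ϖC < 0) (t : ℝ) :
    0 < γ ^ 2 / g - 2 * ϖC * t ^ 2 := by
  have : 0 ≤ -ϖC * t ^ 2 := mul_nonneg (neg_nonneg.2 hC.le) (sq_nonneg _)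
  have : 0 < γ ^ 2 / g := by positivity
  linarith

theorem continuous_cavityOfExciton : Continuous (cavityOfExciton ϖX γ g) := by
  unfold cavityOfExciton; fun_prop

theorem continuous_cavitySlope : Continuous (cavitySlope ϖX ϖC γ g) := by
  unfold cavitySlope; fun_prop

theorem continuousOn_excitonField :
    ContinuousOn (excitonField ϖX ϖC γ g) {t | 3 * g * t ^ 2 ≠ ϖX} :=
  ContinuousOn.div (by fun_prop) (by fun_prop) fun _ ht => sub_ne_zero.2 ht

theorem hasDerivAt_cavityOfExciton (t : ℝ) :
    HasDerivAt (cavityOfExciton ϖX γ g) ((ϖX - 3 * g * t ^ 2) / γ) t := by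
  refine ((((hasDerivAt_id t).const_mul ϖX).sub
    ((hasDerivAt_pow 3 t).const_mul g)).div_const γ).congr_deriv ?_
  norm_num
  ring

theorem hasDerivAt_cavitySlope (hγ : γ ≠ 0) (hg : 0 < g) (hC : ϖC < 0) (t : ℝ) :
    HasDerivAt (cavitySlope ϖX ϖC γ g)
      (2 * ϖC * t * (ϖX - 3 * g * t ^ 2) / (γ * √(γ ^ 2 / g - 2 * ϖC * t ^ 2))) t := by
  have hQ := radicand_pos hγ hg hC t
  refine (((((hasDerivAt_pow 2 t).const_mul g).const_sub (ϖX - γ ^ 2 / ϖC)).mul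
    ((((hasDerivAt_pow 2 t).const_mul (2 * ϖC)).const_sub (γ ^ 2 / g)).sqrt hQ.ne')).neg.div_const
    γ).congr_deriv ?_
  have hRsq := Real.sq_sqrt hQ.le
  have hR0 := (Real.sqrt_pos.2 hQ).ne'
  norm_num
  generalize √(γ ^ 2 / g - 2 * ϖC * t ^ 2) = R at *
  field_simp
  rw [hRsq]
  field_simp [hC.ne]
  ring

section Composition

variable {u : ℝ → ℝ} {x : ℝ}

theorem hasDerivAt_cavityOfExciton_comp (hD : 3 * g * u x ^ 2 ≠ ϖX)
    (hu : HasDerivAt u (excitonField ϖX ϖC γ g (u x)) x) :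
    HasDerivAt (fun y => cavityOfExciton ϖX γ g (u y)) (cavitySlope ϖX ϖC γ g (u x)) x := by
  refine ((hasDerivAt_cavityOfExciton (u x)).comp x hu).congr_deriv ?_
  have hD' : 3 * g * u x ^ 2 - ϖX ≠ 0 := sub_ne_zero.2 hD
  rw [excitonField, cavitySlope]
  field_simp
  ring

theorem hasDerivAt_cavitySlope_comp (hγ : γ ≠ 0) (hg : 0 < g) (hC : ϖC < 0)
    (hD : 3 * g * u x ^ 2 ≠ ϖX) (hu : HasDerivAt u (excitonField ϖX ϖC γ g (u x)) x) :
    HasDerivAt (fun y => cavitySlope ϖX ϖC γ g (u y))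
      (2 * (γ * u x - ϖC * cavityOfExciton ϖX γ g (u x))) x := by
  refine ((hasDerivAt_cavitySlope hγ hg hC (u x)).comp x hu).congr_deriv ?_
  have hD' : 3 * g * u x ^ 2 - ϖX ≠ 0 := sub_ne_zero.2 hD
  have hR0 := (Real.sqrt_pos.2 (radicand_pos hγ hg hC (u x))).ne'
  rw [excitonField, cavityOfExciton]
  generalize √(γ ^ 2 / g - 2 * ϖC * u x ^ 2) = R at hR0 ⊢
  generalize u x = t at hD' ⊢
  rw [div_mul_div_comm, div_eq_iff (mul_ne_zero (mul_ne_zero hγ hR0) hD')]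
  field_simp [hC.ne]
  ring

end Composition

section Quadrature

variable {a s t : ℝ}

theorem excitonField_denom_pos (hg : 0 < g) (ha : g * a ^ 2 = ϖX) (ha0 : 0 < a) (ht : a ≤ t) :
    2 * ϖX ≤ 3 * g * t ^ 2 - ϖX := by
  have : g * a ^ 2 ≤ g * t ^ 2 := by gcongr
  linarith

theorem excitonField_denom_ne (hg : 0 < g) (ha : g * a ^ 2 = ϖX) (ha0 : 0 < a) (ht : a ≤ t) :
    3 * g * t ^ 2 ≠ ϖX := by
  have := excitonField_denom_pos hg ha ha0 ht
  have : 0 < ϖX := ha ▸ by positivity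
  linarith

theorem excitonField_pos (hγ : γ ≠ 0) (hg : 0 < g) (hC : ϖC < 0) (ha : g * a ^ 2 = ϖX)
    (hs : g * s ^ 2 = ϖX - γ ^ 2 / ϖC) (ha0 : 0 < a) (ht : t ∈ Ico a s) :
    0 < excitonField ϖX ϖC γ g t := by
  have hP : 0 < ϖX - γ ^ 2 / ϖC - g * t ^ 2 := by
    rw [← hs, ← mul_sub]
    exact mul_pos hg (sub_pos.2 (pow_lt_pow_left₀ ht.2 (ha0.le.trans ht.1) two_ne_zero))
  have hD := excitonField_denom_pos hg ha ha0 ht.1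
  have hX : 0 < ϖX := ha ▸ by positivity
  exact div_pos (mul_pos hP (Real.sqrt_pos.2 (radicand_pos hγ hg hC t))) (by linarith)

theorem excitonField_le_mul_sub (hg : 0 < g) (hC : ϖC < 0) (ha : g * a ^ 2 = ϖX)
    (hs : g * s ^ 2 = ϖX - γ ^ 2 / ϖC) (ha0 : 0 < a) (ht : t ∈ Ico a s) :
    excitonField ϖX ϖC γ g t ≤ g * s * √(γ ^ 2 / g - 2 * ϖC * s ^ 2) / ϖX * (s - t) := by
  have ht0 : 0 ≤ t := ha0.le.trans ht.1
  have hs0 : 0 ≤ s := ht0.trans ht.2.le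
  have hst : 0 ≤ s - t := sub_nonneg.2 ht.2.le
  have hX : 0 < ϖX := ha ▸ by positivity
  have hD := excitonField_denom_pos hg ha ha0 ht.1
  have hP : ϖX - γ ^ 2 / ϖC - g * t ^ 2 ≤ 2 * g * s * (s - t) := by
    rw [← hs]; nlinarith [mul_nonneg hg.le (sq_nonneg (s - t))]
  have hR : √(γ ^ 2 / g - 2 * ϖC * t ^ 2) ≤ √(γ ^ 2 / g - 2 * ϖC * s ^ 2) :=
    Real.sqrt_le_sqrt (by nlinarith [pow_le_pow_left₀ ht0 ht.2.le 2])
  rw [excitonField, div_le_iff₀ (by linarith)]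
  calc (ϖX - γ ^ 2 / ϖC - g * t ^ 2) * √(γ ^ 2 / g - 2 * ϖC * t ^ 2)
      ≤ 2 * g * s * (s - t) * √(γ ^ 2 / g - 2 * ϖC * s ^ 2) := by gcongr
    _ = g * s * √(γ ^ 2 / g - 2 * ϖC * s ^ 2) / ϖX * (s - t) * (2 * ϖX) := by field_simp
    _ ≤ g * s * √(γ ^ 2 / g - 2 * ϖC * s ^ 2) / ϖX * (s - t) * (3 * g * t ^ 2 - ϖX) := by
        gcongr

theorem exists_isMonotoneOrbit_excitonField (hγ : γ ≠ 0) (hg : 0 < g) (hC : ϖC < 0)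
    (ha : g * a ^ 2 = ϖX) (hs : g * s ^ 2 = ϖX - γ ^ 2 / ϖC) (ha0 : 0 < a) (has : a < s) :
    ∃ u, IsMonotoneOrbit (excitonField ϖX ϖC γ g) a s u := by
  have hcont : ContinuousOn (excitonField ϖX ϖC γ g) (Ico a s) :=
    continuousOn_excitonField.mono fun t ht => excitonField_denom_ne hg ha ha0 ht.1
  have hpos := fun t (ht : t ∈ Ico a s) => excitonField_pos hγ hg hC ha hs ha0 ht
  have hK : 0 < g * s * √(γ ^ 2 / g - 2 * ϖC * s ^ 2) / ϖX := by
    have := Real.sqrt_pos.2 (radicand_pos hγ hg hC s)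
    have : 0 < ϖX := ha ▸ by positivity
    have : 0 < s := ha0.trans has
    positivity
  exact exists_isMonotoneOrbit_of_tendsto_integral_inv has hcont hpos
    (tendsto_integral_inv_atTop_of_le_mul_sub has hK hcont hpos
      fun t ht => excitonField_le_mul_sub hg hC ha hs ha0 ht)

end Quadrature

section Soliton

variable {a s : ℝ} {u : ℝ → ℝ}

theorem hasDerivAt_oddExtension_cavityOfExciton (hg : 0 < g) (ha : g * a ^ 2 = ϖX)
    (ha0 : 0 < a) (hu : IsMonotoneOrbit (excitonField ϖX ϖC γ g) a s u) (x : ℝ) :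
    HasDerivAt (oddExtension (cavityOfExciton ϖX γ g ∘ u)) (cavitySlope ϖX ϖC γ g (u |x|)) x :=
  hasDerivAt_oddExtension
    (fun y hy => hasDerivAt_cavityOfExciton_comp
      (excitonField_denom_ne hg ha ha0 (hu.mapsTo hy).1.le) (hu.hasDerivAt y hy))
    (continuous_cavityOfExciton.comp_continuousOn hu.continuousOn 0 self_mem_Ici)
    (by rw [hu.map_zero, cavityOfExciton_eq_zero ha])
    (continuous_cavitySlope.comp_continuousOn hu.continuousOn) x

theorem hasDerivAt_cavitySlope_comp_abs (hγ : γ ≠ 0) (hg : 0 < g) (hC : ϖC < 0)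
    (ha : g * a ^ 2 = ϖX) (ha0 : 0 < a) (hu : IsMonotoneOrbit (excitonField ϖX ϖC γ g) a s u)
    {x : ℝ} (hx : x ≠ 0) :
    HasDerivAt (fun y => cavitySlope ϖX ϖC γ g (u |y|))
      (2 * (γ * u |x| - ϖC * cavityOfExciton ϖX γ g (u |x|)) * SignType.sign x) x :=
  (hasDerivAt_cavitySlope_comp hγ hg hC
    (excitonField_denom_ne hg ha ha0 (hu.mapsTo (abs_pos.2 hx)).1.le)
    (hu.hasDerivAt _ (abs_pos.2 hx))).comp x (hasDerivAt_abs hx)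

theorem deriv_oddExtension_cavityOfExciton (hg : 0 < g) (ha : g * a ^ 2 = ϖX) (ha0 : 0 < a)
    (hu : IsMonotoneOrbit (excitonField ϖX ϖC γ g) a s u) :
    deriv (oddExtension (cavityOfExciton ϖX γ g ∘ u)) = fun x => cavitySlope ϖX ϖC γ g (u |x|) :=
  funext fun x => (hasDerivAt_oddExtension_cavityOfExciton hg ha ha0 hu x).deriv

theorem contDiff_one_oddExtension_cavityOfExciton (hg : 0 < g) (ha : g * a ^ 2 = ϖX)
    (ha0 : 0 < a) (hu : IsMonotoneOrbit (excitonField ϖX ϖC γ g) a s u) :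
    ContDiff ℝ 1 (oddExtension (cavityOfExciton ϖX γ g ∘ u)) := by
  refine contDiff_one_iff_deriv.2
    ⟨fun x => (hasDerivAt_oddExtension_cavityOfExciton hg ha ha0 hu x).differentiableAt, ?_⟩
  rw [deriv_oddExtension_cavityOfExciton hg ha ha0 hu]
  exact (continuous_cavitySlope.comp_continuousOn hu.continuousOn).comp_continuous
    continuous_abs abs_nonneg

theorem envelope_equations (hγ : γ ≠ 0) (hg : 0 < g) (hC : ϖC < 0) (ha : g * a ^ 2 = ϖX)
    (ha0 : 0 < a) (hu : IsMonotoneOrbit (excitonField ϖX ϖC γ g) a s u) {x : ℝ} (hx : x ≠ 0) :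
    (g * oddExtension u x ^ 2 - ϖX) * oddExtension u x +
        γ * oddExtension (cavityOfExciton ϖX γ g ∘ u) x = 0 ∧
      -(1 / 2) * deriv (deriv (oddExtension (cavityOfExciton ϖX γ g ∘ u))) x -
        ϖC * oddExtension (cavityOfExciton ϖX γ g ∘ u) x + γ * oddExtension u x = 0 := by
  rw [deriv_oddExtension_cavityOfExciton hg ha ha0 hu,
    (hasDerivAt_cavitySlope_comp_abs hγ hg hC ha ha0 hu hx).deriv]
  simp only [oddExtension, Function.comp]
  constructor
  · linear_combination
      (SignType.sign x : ℝ) * exciton_equation_cavityOfExciton (ϖX := ϖX) hγ (u |x|) +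
      g * u |x| ^ 3 * SignType.sign x * sign_mul_sign_of_ne_zero hx
  · ring

end Soliton

end Polariton

/-- Band 3.2: existence of discontinuous dark solitons for `g > 0`, `ωX < ω < ωC`:
antisymmetric envelopes, `φC` continuously differentiable and twice differentiable away
from `0`, satisfying the envelope equations away from `0`; `φX` jumps at `0` with right
limit `√(ϖX/g)`, `φX²` strictly increasing on `(0,∞)` with far-field value
`(ϖX − γ²/ϖC)/g`. -/
theorem discontinuous_soliton_band_3_2
    (ω ωX ωC γ g : ℝ) (hγ : γ ≠ 0) (hg : 0 < g)
    (hω₁ : ωX < ω) (hω₂ : ω < ωC) :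
    ∃ φX φC : ℝ → ℝ,
      (∀ x : ℝ, φX (-x) = -φX x) ∧ (∀ x : ℝ, φC (-x) = -φC x) ∧
      ContDiff ℝ 1 φC ∧ φC 0 = 0 ∧
      (∀ x : ℝ, x ≠ 0 → DifferentiableAt ℝ (deriv φC) x) ∧
      (∀ x : ℝ, x ≠ 0 →
        (g * φX x ^ 2 - (ω - ωX)) * φX x + γ * φC x = 0 ∧
        -(1/2) * deriv (deriv φC) x - (ω - ωC) * φC x + γ * φX x = 0) ∧
      Tendsto φX (nhdsWithin 0 (Set.Ioi 0)) (nhds (Real.sqrt ((ω - ωX) / g))) ∧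
      StrictMonoOn (fun x => φX x ^ 2) (Set.Ioi 0) ∧
      Tendsto (fun x => φX x ^ 2) atTop (nhds (((ω - ωX) - γ ^ 2 / (ω - ωC)) / g)) := by
  set ϖX := ω - ωX
  set ϖC := ω - ωC
  have hX : 0 < ϖX := sub_pos.2 hω₁
  have hC : ϖC < 0 := sub_neg.2 hω₂
  have hS : ϖX < ϖX - γ ^ 2 / ϖC := by
    linarith [div_neg_of_pos_of_neg (by positivity : 0 < γ ^ 2) hC]
  have hS0 : 0 ≤ (ϖX - γ ^ 2 / ϖC) / g := div_nonneg (hX.trans hS).le hg.le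
  have ha : g * √(ϖX / g) ^ 2 = ϖX := by rw [Real.sq_sqrt (by positivity)]; field_simp
  have hs : g * √((ϖX - γ ^ 2 / ϖC) / g) ^ 2 = ϖX - γ ^ 2 / ϖC := by
    rw [Real.sq_sqrt hS0]; field_simp
  have ha0 : 0 < √(ϖX / g) := Real.sqrt_pos.2 (by positivity)
  obtain ⟨u, hu⟩ := Polariton.exists_isMonotoneOrbit_excitonField hγ hg hC ha hs ha0
    (Real.sqrt_lt_sqrt (by positivity) (div_lt_div_of_pos_right hS hg))
  refine ⟨oddExtension u, oddExtension (Polariton.cavityOfExciton ϖX γ g ∘ u),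
    oddExtension_neg u, oddExtension_neg _,
    Polariton.contDiff_one_oddExtension_cavityOfExciton hg ha ha0 hu, oddExtension_zero,
    fun x hx => ?_, fun x hx => Polariton.envelope_equations hγ hg hC ha ha0 hu hx,
    hu.tendsto_oddExtension_nhdsGT, hu.strictMonoOn_sq_oddExtension ha0.le, ?_⟩
  · rw [Polariton.deriv_oddExtension_cavityOfExciton hg ha ha0 hu]
    exact (Polariton.hasDerivAt_cavitySlope_comp_abs hγ hg hC ha ha0 hu hx).differentiableAt
  · simpa [Real.sq_sqrt hS0] using hu.tendsto_sq_oddExtension_atTop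
end

section
/- Let ϖ_X, ϖ_C, γ be real numbers with γ ≠ 0, ϖ_C < 0, and ϖ_X·ϖ_C > (3/2)·γ² (band 3.1). Set ζ = ϖ_X − γ²/ϖ_C and α = 2ζ − ϖ_X. Then there exists a real k such that, with β = k² − ϖ_C, one has γ⁴ − 2αβγ² + (α² − ζ²)β² < 0; consequently there exist a real k and a real s > 0 such that D(k,s) = 0. Hence the far field of the discontinuous solitons in band 3.1 is linearly unstable. -/
/-!
The far-field value `ζ = ϖ_X - γ²/ϖ_C` is exactly the one for which the
constant term of the dispersion quartic vanishes at `k = 0`; it then factors as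
`(ζ - ϖ_X) k² ((3ζ - ϖ_X) β - γ²)`. In band 3.1 one has `ζ > ϖ_X` and `3ζ < ϖ_X`, while
`β = k² - ϖ_C > 0`, so the constant term is negative for every `k ≠ 0`. A biquadratic
`s⁴ + A s² + C` with `C < 0` always has a positive root.
-/

def dispersionConst (α β γ ζ : ℝ) : ℝ :=
  γ ^ 4 - 2 * α * β * γ ^ 2 + (α ^ 2 - ζ ^ 2) * β ^ 2

def dispersionQuartic (α β γ ζ s : ℝ) : ℝ :=
  s ^ 4 + (α ^ 2 + β ^ 2 + 2 * γ ^ 2 - ζ ^ 2) * s ^ 2 + dispersionConst α β γ ζ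

lemma exists_pos_root_quadratic_of_neg {A C : ℝ} (hC : C < 0) :
    ∃ t : ℝ, 0 < t ∧ t ^ 2 + A * t + C = 0 := by
  have hdisc : 0 ≤ A ^ 2 - 4 * C := by nlinarith [sq_nonneg A]
  set r := Real.sqrt (A ^ 2 - 4 * C)
  have hr : r ^ 2 = A ^ 2 - 4 * C := Real.sq_sqrt hdisc
  have hAr : A < r := by
    by_contra! hle
    nlinarith [Real.sqrt_nonneg (A ^ 2 - 4 * C)]
  exact ⟨(r - A) / 2, by linarith, by linear_combination hr / 4⟩

lemma exists_pos_root_biquadratic_of_neg {A C : ℝ} (hC : C < 0) :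
    ∃ s : ℝ, 0 < s ∧ s ^ 4 + A * s ^ 2 + C = 0 := by
  obtain ⟨t, ht, hroot⟩ := exists_pos_root_quadratic_of_neg (A := A) hC
  refine ⟨Real.sqrt t, Real.sqrt_pos.mpr ht, ?_⟩
  have hsq : Real.sqrt t ^ 2 = t := Real.sq_sqrt ht.le
  rw [show Real.sqrt t ^ 4 = (Real.sqrt t ^ 2) ^ 2 by ring, hsq, hroot]

lemma exists_pos_root_dispersionQuartic {α β γ ζ : ℝ} (h : dispersionConst α β γ ζ < 0) :
    ∃ s : ℝ, 0 < s ∧ dispersionQuartic α β γ ζ s = 0 :=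
  exists_pos_root_biquadratic_of_neg h

section FarField

variable {ϖX ϖC γ ζ : ℝ}

lemma dispersionConst_eq_mul (hζ : γ ^ 2 = ϖC * (ϖX - ζ)) (k : ℝ) :
    dispersionConst (2 * ζ - ϖX) (k ^ 2 - ϖC) γ ζ
      = (ζ - ϖX) * k ^ 2 * ((3 * ζ - ϖX) * (k ^ 2 - ϖC) - γ ^ 2) := by
  unfold dispersionConst
  linear_combination (γ ^ 2 + ϖC * (ϖX - ζ) - 2 * (2 * ζ - ϖX) * (k ^ 2 - ϖC)
    + (ζ - ϖX) * k ^ 2) * hζ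

lemma dispersionConst_neg (hζ : γ ^ 2 = ϖC * (ϖX - ζ)) (hϖC : ϖC < 0) (hlt : ϖX < ζ)
    (h3 : 3 * ζ < ϖX) {k : ℝ} (hk : k ≠ 0) :
    dispersionConst (2 * ζ - ϖX) (k ^ 2 - ϖC) γ ζ < 0 := by
  rw [dispersionConst_eq_mul hζ]
  have hβ : 0 < k ^ 2 - ϖC := by nlinarith [sq_nonneg k]
  have hbracket : (3 * ζ - ϖX) * (k ^ 2 - ϖC) - γ ^ 2 < 0 := by
    nlinarith [mul_neg_of_neg_of_pos (sub_neg.mpr h3) hβ, sq_nonneg γ]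
  exact mul_neg_of_pos_of_neg (mul_pos (sub_pos.mpr hlt) (by positivity)) hbracket

end FarField

section Band31

variable {ϖX ϖC γ : ℝ}

lemma sq_eq_mul_sub_farField (hϖC : ϖC ≠ 0) : γ ^ 2 = ϖC * (ϖX - (ϖX - γ ^ 2 / ϖC)) := by
  field_simp
  ring

lemma lt_farField (hγ : γ ≠ 0) (hϖC : ϖC < 0) : ϖX < ϖX - γ ^ 2 / ϖC := by
  have : γ ^ 2 / ϖC < 0 := div_neg_of_pos_of_neg (by positivity) hϖC
  linarith

lemma three_mul_farField_lt (hϖC : ϖC < 0) (hband : ϖX * ϖC > (3/2) * γ ^ 2) :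
    3 * (ϖX - γ ^ 2 / ϖC) < ϖX := by
  have hcancel : γ ^ 2 / ϖC * ϖC = γ ^ 2 := div_mul_cancel₀ _ hϖC.ne
  nlinarith

end Band31

/-- Instability of the far field of band 3.1: for `ϖC < 0` and `ϖX·ϖC > (3/2)γ²`, the
constant term of the dispersion quartic is negative for some mode `k`, and hence the
quartic has a positive real root `s`. -/
theorem far_field_unstable_band_3_1
    (ϖX ϖC γ : ℝ) (hγ : γ ≠ 0) (hϖC : ϖC < 0)
    (hband : ϖX * ϖC > (3/2) * γ ^ 2) :
    (∃ k : ℝ,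
      γ ^ 4 - 2 * (2 * (ϖX - γ ^ 2 / ϖC) - ϖX) * (k ^ 2 - ϖC) * γ ^ 2
        + ((2 * (ϖX - γ ^ 2 / ϖC) - ϖX) ^ 2 - (ϖX - γ ^ 2 / ϖC) ^ 2)
          * (k ^ 2 - ϖC) ^ 2 < 0) ∧
    (∃ k s : ℝ, 0 < s ∧
      s ^ 4
        + ((2 * (ϖX - γ ^ 2 / ϖC) - ϖX) ^ 2 + (k ^ 2 - ϖC) ^ 2 + 2 * γ ^ 2
            - (ϖX - γ ^ 2 / ϖC) ^ 2) * s ^ 2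
        + (γ ^ 4 - 2 * (2 * (ϖX - γ ^ 2 / ϖC) - ϖX) * (k ^ 2 - ϖC) * γ ^ 2
            + ((2 * (ϖX - γ ^ 2 / ϖC) - ϖX) ^ 2 - (ϖX - γ ^ 2 / ϖC) ^ 2)
              * (k ^ 2 - ϖC) ^ 2) = 0) := by
  have hconst := dispersionConst_neg (sq_eq_mul_sub_farField hϖC.ne) hϖC (lt_farField hγ hϖC)
    (three_mul_farField_lt hϖC hband) one_ne_zero
  obtain ⟨s, hs, hroot⟩ := exists_pos_root_dispersionQuartic hconst
  exact ⟨⟨1, hconst⟩, ⟨1, s, hs, hroot⟩⟩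
end
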